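/- arXiv:1306.6015 — 5 statements merged into one kernel-verified Lean document; each statement's English description precedes it below -/
import Mathlib

section
/- For positive integers k, m and nonnegative integers a, b, n with a ≤ m, b ≤ n, n ≥ km, and 0 ≤ b − ka ≤ k, the number of monotone lattice paths from (a, b) to (m, n) that stay weakly above the line y = kx equals ((n+1−km)/(n+1−ka)) · C(m+n−(k+1)a, m−a). -/
open Finset

/-- A monotone lattice path from `s` to `t` using unit steps `(1,0)` and `(0,1)`. -/
def MonoPath (s t : ℤ × ℤ) (P : List (ℤ × ℤ)) : Prop :=
  P.head? = some s ∧ P.getLast? = some t ∧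
  P.Chain' (fun p q => q = (p.1 + 1, p.2) ∨ q = (p.1, p.2 + 1))

/-- Integer binomial coefficient, `0` for negative lower index. -/
def IC (x j : ℤ) : ℕ := if j < 0 then 0 else x.toNat.choose j.toNat

/-- Number of monotone lattice paths from `(a,b)` to `(m,n)` staying weakly above `y = kx - r`. -/
noncomputable def NW (k r a b m n : ℤ) : ℕ :=
  Set.ncard {P : List (ℤ × ℤ) | MonoPath (a, b) (m, n) P ∧ ∀ p ∈ P, k * p.1 - r ≤ p.2}

/-- Number of monotone lattice paths from `(a,b)` to `(m,n)` staying strictly above `y = kx - r`. -/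
noncomputable def NS (k r a b m n : ℤ) : ℕ :=
  Set.ncard {P : List (ℤ × ℤ) | MonoPath (a, b) (m, n) P ∧ ∀ p ∈ P, k * p.1 - r < p.2}

/-!
Deleting the last step of a path shows that the count `N(m, n)` satisfies Pascal's recursion
`N(m, n) = N(m - 1, n) + N(m, n - 1)` whenever `(m, n) ≠ (a, b)` lies weakly above the line.
With `r = m - a` and `u = n - ka`, the closed form equals `C(r + u, r) - k C(r + u, r - 1)`
as soon as `u ≥ 0`, so it satisfies the same recursion; it vanishes at `r = -1` and at
`u + 1 = kr`, the two places where the recursion leaves the region of admissible endpoints.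
Since `ka ≤ b ≤ ka + k`, every admissible endpoint other than `(a, b)` has `u ≥ 1`, so the
recursion of the closed form applies there.
-/

section MonoPath

variable {s t : ℤ × ℤ} {P : List (ℤ × ℤ)}

lemma MonoPath.ne_nil (h : MonoPath s t P) : P ≠ [] := by
  rintro rfl
  simp [MonoPath] at h

lemma MonoPath.append_singleton {q : ℤ × ℤ} (h : MonoPath s q P)
    (hqt : t = (q.1 + 1, q.2) ∨ t = (q.1, q.2 + 1)) : MonoPath s t (P ++ [t]) :=
  ⟨by rw [List.head?_append_of_ne_nil _ h.ne_nil]; exact h.1, List.getLast?_concat,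
    List.isChain_append.2 ⟨h.2.2, List.isChain_singleton t, by simpa [h.2.1] using hqt⟩⟩

lemma monoPath_iff : MonoPath s t P ↔ (P = [s] ∧ s = t) ∨
    ∃ Q, P = Q ++ [t] ∧ (MonoPath s (t.1 - 1, t.2) Q ∨ MonoPath s (t.1, t.2 - 1) Q) := by
  constructor
  · rintro ⟨hs, ht, hc⟩
    rcases P.eq_nil_or_concat' with rfl | ⟨L, x, rfl⟩
    · simp at hs
    rw [List.getLast?_concat, Option.some_inj] at ht
    subst ht
    rcases L.eq_nil_or_concat' with rfl | ⟨L, q, rfl⟩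
    · simp_all
    obtain ⟨hcL, -, hstep⟩ := List.isChain_append.1 hc
    have hq : MonoPath s q (L ++ [q]) :=
      ⟨by rwa [List.head?_append_of_ne_nil _ (by simp)] at hs, List.getLast?_concat, hcL⟩
    right
    refine ⟨L ++ [q], rfl, ?_⟩
    rcases hstep q (by simp) x (by simp) with rfl | rfl
    · left; simpa using hq
    · right; simpa using hq
  · rintro (⟨rfl, rfl⟩ | ⟨Q, rfl, hQ⟩)
    · exact ⟨rfl, rfl, List.isChain_singleton s⟩
    rcases hQ with hQ | hQ
    · exact hQ.append_singleton (.inl (by simp))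
    · exact hQ.append_singleton (.inr (by simp))

lemma MonoPath.le (h : MonoPath s t P) : s ≤ t := by
  induction P using List.reverseRecOn generalizing t with
  | nil => simp [MonoPath] at h
  | append_singleton L x ih =>
    rcases monoPath_iff.1 h with ⟨-, rfl⟩ | ⟨Q, hLQ, hQ | hQ⟩
    · exact le_rfl
    all_goals
      obtain rfl := List.append_inj_left' hLQ rfl
      have := Prod.le_def.1 (ih hQ)
      exact Prod.le_def.2 (by simp only at this; omega)

lemma finite_setOf_monoPath (s t : ℤ × ℤ) : {P | MonoPath s t P}.Finite := by
  suffices ∀ N : ℕ, ∀ t : ℤ × ℤ, t.1 + t.2 < s.1 + s.2 + N →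
      {P | MonoPath s t P}.Finite from
    this (t.1 + t.2 - s.1 - s.2 + 1).toNat t (by omega)
  intro N
  induction N with
  | zero =>
    refine fun t ht ↦ Set.finite_empty.subset fun P hP ↦ ?_
    have := Prod.le_def.1 (MonoPath.le hP)
    omega
  | succ N ih =>
    refine fun t ht ↦ ((Set.finite_singleton [s]).union
      (((ih (t.1 - 1, t.2) ?_).union (ih (t.1, t.2 - 1) ?_)).image (· ++ [t]))).subset
        fun P hP ↦ ?_
    · simp only; omega
    · simp only; omega
    rcases monoPath_iff.1 hP with ⟨rfl, -⟩ | ⟨Q, rfl, hQ⟩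
    · exact .inl rfl
    · exact .inr ⟨Q, hQ, rfl⟩

end MonoPath

def abovePaths (k r : ℤ) (s t : ℤ × ℤ) : Set (List (ℤ × ℤ)) :=
  {P | MonoPath s t P ∧ ∀ p ∈ P, k * p.1 - r ≤ p.2}

section abovePaths

variable {k r : ℤ} {s t : ℤ × ℤ}

lemma abovePaths_finite : (abovePaths k r s t).Finite :=
  (finite_setOf_monoPath s t).subset fun _ hP ↦ hP.1

lemma abovePaths_eq_empty_of_not_le (h : ¬ s ≤ t) : abovePaths k r s t = ∅ :=
  Set.eq_empty_of_forall_notMem fun _ hP ↦ h hP.1.le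

lemma abovePaths_eq_empty_of_lt (h : t.2 < k * t.1 - r) : abovePaths k r s t = ∅ :=
  Set.eq_empty_of_forall_notMem fun _ hP ↦ (hP.2 t (List.mem_of_getLast? hP.1.2.1)).not_gt h

lemma abovePaths_self (h : k * s.1 - r ≤ s.2) : abovePaths k r s s = {[s]} := by
  ext P
  constructor
  · rintro ⟨hP, -⟩
    rcases monoPath_iff.1 hP with ⟨rfl, -⟩ | ⟨Q, -, hQ | hQ⟩
    · rfl
    all_goals
      have := Prod.le_def.1 hQ.le
      simp only at this
      omega
  · rintro rfl
    exact ⟨monoPath_iff.2 (.inl ⟨rfl, rfl⟩), by simpa using h⟩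

lemma abovePaths_eq_image (hst : s ≠ t) (ht : k * t.1 - r ≤ t.2) :
    abovePaths k r s t =
      (· ++ [t]) '' (abovePaths k r s (t.1 - 1, t.2) ∪ abovePaths k r s (t.1, t.2 - 1)) := by
  ext P
  constructor
  · rintro ⟨hP, habove⟩
    rcases monoPath_iff.1 hP with ⟨-, rfl⟩ | ⟨Q, rfl, hQ⟩
    · exact absurd rfl hst
    have hQ' : ∀ p ∈ Q, k * p.1 - r ≤ p.2 := fun p hp ↦ habove p (List.mem_append_left _ hp)
    exact ⟨Q, hQ.imp (⟨·, hQ'⟩) (⟨·, hQ'⟩), rfl⟩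
  · rintro ⟨Q, hQ, rfl⟩
    refine ⟨monoPath_iff.2 (.inr ⟨Q, rfl, hQ.imp And.left And.left⟩), ?_⟩
    simp only [List.mem_append, List.mem_singleton]
    rintro p (hp | rfl)
    · exact hQ.elim (·.2 p hp) (·.2 p hp)
    · exact ht

lemma ncard_abovePaths (hst : s ≠ t) (ht : k * t.1 - r ≤ t.2) :
    (abovePaths k r s t).ncard =
      (abovePaths k r s (t.1 - 1, t.2)).ncard + (abovePaths k r s (t.1, t.2 - 1)).ncard := by
  have hdisj : Disjoint (abovePaths k r s (t.1 - 1, t.2)) (abovePaths k r s (t.1, t.2 - 1)) :=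
    Set.disjoint_left.2 fun P h₁ h₂ ↦ by simpa using h₁.1.2.1.symm.trans h₂.1.2.1
  rw [abovePaths_eq_image hst ht, Set.ncard_image_of_injective _ (List.append_left_injective _),
    Set.ncard_union_eq hdisj abovePaths_finite abovePaths_finite]

end abovePaths

lemma IC_of_neg {x j : ℤ} (hj : j < 0) : IC x j = 0 := if_pos hj

lemma IC_zero (x : ℤ) : IC x 0 = 1 := by simp [IC]

lemma IC_add_one {x : ℤ} (hx : 0 ≤ x) (j : ℤ) : IC (x + 1) j = IC x (j - 1) + IC x j := by
  lift x to ℕ using hx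
  rcases lt_trichotomy j 0 with hj | rfl | hj
  · rw [IC_of_neg hj, IC_of_neg hj, IC_of_neg (by omega)]
  · rw [IC_zero, IC_zero, IC_of_neg (by omega)]
  · obtain ⟨j, rfl⟩ : ∃ i : ℕ, j = i + 1 := ⟨(j - 1).toNat, by omega⟩
    simp only [IC, add_sub_cancel_right]
    rw [if_neg (by omega), if_neg (by omega), if_neg (by omega)]
    simpa using Nat.choose_succ_succ' x j

lemma add_one_mul_IC_sub_one {u : ℤ} (hu : 0 ≤ u) (r : ℤ) :
    (u + 1) * (IC (r + u) (r - 1) : ℤ) = r * IC (r + u) r := by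
  rcases lt_trichotomy r 0 with hr | rfl | hr
  · rw [IC_of_neg hr, IC_of_neg (by omega)]; simp
  · rw [IC_of_neg (by omega)]; simp
  lift u to ℕ using hu
  obtain ⟨r, rfl⟩ : ∃ i : ℕ, r = i + 1 := ⟨(r - 1).toNat, by omega⟩
  simp only [IC, add_sub_cancel_right]
  rw [if_neg (by omega), if_neg (by omega)]
  have := Nat.choose_succ_right_eq (r + 1 + u) r
  rw [show r + 1 + u - r = u + 1 by omega] at this
  simp only [Int.toNat_natCast, show ((r : ℤ) + 1 + u).toNat = r + 1 + u by omega]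
  exact_mod_cast by linarith

def ballot (k r u : ℤ) : ℚ :=
  ((u + 1 - k * r : ℤ) : ℚ) / ((u + 1 : ℤ) : ℚ) * IC (r + u) r

section ballot

variable {k r u : ℤ}

lemma ballot_of_neg (hr : r < 0) : ballot k r u = 0 := by simp [ballot, IC_of_neg hr]

lemma ballot_zero (hu : 0 ≤ u) : ballot k 0 u = 1 := by
  have : ((u + 1 : ℤ) : ℚ) ≠ 0 := by exact_mod_cast (by omega : u + 1 ≠ 0)
  rw [ballot, IC_zero, mul_zero, sub_zero, Nat.cast_one, mul_one, div_self this]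

lemma ballot_eq_zero (h : u + 1 = k * r) : ballot k r u = 0 := by simp [ballot, h]

lemma ballot_eq_IC_sub (hu : 0 ≤ u) :
    ballot k r u = IC (r + u) r - k * IC (r + u) (r - 1) := by
  have hu₁ : ((u + 1 : ℤ) : ℚ) ≠ 0 := by exact_mod_cast (by omega : u + 1 ≠ 0)
  have key : ((u + 1 : ℤ) : ℚ) * IC (r + u) (r - 1) = r * IC (r + u) r := by
    exact_mod_cast add_one_mul_IC_sub_one hu r
  rw [ballot, div_mul_eq_mul_div, div_eq_iff hu₁]
  push_cast at key ⊢
  linear_combination k * key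

lemma ballot_eq_add (hr : 0 ≤ r) (hu : 1 ≤ u) :
    ballot k r u = ballot k (r - 1) u + ballot k r (u - 1) := by
  have h₁ := IC_add_one (x := r + u - 1) (by omega) r
  have h₂ := IC_add_one (x := r + u - 1) (by omega) (r - 1)
  rw [sub_add_cancel] at h₁ h₂
  rw [ballot_eq_IC_sub (by omega), ballot_eq_IC_sub (by omega), ballot_eq_IC_sub (by omega),
    h₁, h₂, show r - 1 + u = r + u - 1 by ring, show r + (u - 1) = r + u - 1 by ring]
  push_cast
  ring

end ballot

lemma NW_eq_ncard_abovePaths (k r a b m n : ℤ) :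
    NW k r a b m n = (abovePaths k r (a, b) (m, n)).ncard := rfl

theorem NW_eq_ballot {k a b m n : ℤ} (hk : 1 ≤ k) (hab : k * a ≤ b) (hba : b ≤ k * a + k)
    (ham : a ≤ m) (hbn : b ≤ n) (hmn : k * m ≤ n) :
    (NW k 0 a b m n : ℚ) = ballot k (m - a) (n - k * a) := by
  obtain ⟨N, hN⟩ : ∃ N : ℕ, m + n < a + b + N := ⟨(m + n - a - b + 1).toNat, by omega⟩
  induction N generalizing m n with
  | zero => omega
  | succ N ih =>
    simp only [NW_eq_ncard_abovePaths] at ih ⊢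
    by_cases hst : (a, b) = (m, n)
    · obtain ⟨rfl, rfl⟩ := Prod.mk.inj hst
      rw [abovePaths_self (by simpa using hab), Set.ncard_singleton, sub_self,
        ballot_zero (by omega), Nat.cast_one]
    have hlast : (m = a ∧ b < n) ∨ (a < m ∧ k * a + k ≤ k * m) := by
      rcases eq_or_lt_of_le ham with rfl | h
      · exact .inl ⟨rfl, lt_of_le_of_ne hbn fun h ↦ hst (by rw [h])⟩
      · exact .inr ⟨h, by nlinarith⟩
    rw [ncard_abovePaths hst (by simpa using hmn), Nat.cast_add,
      ballot_eq_add (by omega) (by omega)]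
    congr 1
    · by_cases hm : m = a
      · rw [abovePaths_eq_empty_of_not_le (by simp [Prod.le_def, hm]), Set.ncard_empty,
          ballot_of_neg (by omega), Nat.cast_zero]
      · convert ih (m := m - 1) (by omega) hbn (by nlinarith) (by omega) using 2
        ring
    · by_cases hkm : k * m ≤ n - 1
      · convert ih (n := n - 1) ham (by omega) hkm (by omega) using 2
        ring
      · rw [abovePaths_eq_empty_of_lt (by simp only; omega), Set.ncard_empty,
          ballot_eq_zero (by linarith), Nat.cast_zero]

theorem stmt1_general (k a b m n : ℤ) (hk : 1 ≤ k)
    (ham : a ≤ m) (hbn : b ≤ n) (hn : k * m ≤ n) (h1 : 0 ≤ b - k * a) (h2 : b - k * a ≤ k) :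
    (NW k 0 a b m n : ℚ) =
      ((n + 1 - k * m : ℤ) : ℚ) / ((n + 1 - k * a : ℤ) : ℚ) *
        (IC (m + n - (k + 1) * a) (m - a) : ℚ) := by
  rw [NW_eq_ballot hk (by omega) (by omega) ham hbn hn, ballot,
    show n - k * a + 1 - k * (m - a) = n + 1 - k * m by ring,
    show n - k * a + 1 = n + 1 - k * a by ring,
    show m - a + (n - k * a) = m + n - (k + 1) * a by ring]

theorem stmt1 (k a b m n : ℤ) (hk : 1 ≤ k) (hm : 1 ≤ m) (ha : 0 ≤ a) (hb : 0 ≤ b)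
    (ham : a ≤ m) (hbn : b ≤ n) (hn : k * m ≤ n) (h1 : 0 ≤ b - k * a) (h2 : b - k * a ≤ k) :
    (NW k 0 a b m n : ℚ) =
      ((n + 1 - k * m : ℤ) : ℚ) / ((n + 1 - k * a : ℤ) : ℚ) *
        (IC (m + n - (k + 1) * a) (m - a) : ℚ) :=
  stmt1_general k a b m n hk ham hbn hn h1 h2
end

section
/- For a positive integer k and nonnegative integers m, n with n ≥ km, the number of monotone lattice paths from (0,0) to (m,n) that contain some point (x,y) with y < kx (equivalently, that fail to stay weakly above the line y = kx) equals k·C(m+n, m−1). -/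
open Finset

lemma monopath_structure {s t : ℤ × ℤ} {P : List (ℤ × ℤ)} :
    MonoPath s t P ↔ (t = s ∧ P = [s]) ∨
      ∃ t' P', (t = (t'.1 + 1, t'.2) ∨ t = (t'.1, t'.2 + 1)) ∧ MonoPath s t' P' ∧ P = P' ++ [t] := by
  constructor
  · rintro ⟨h1, h2, h3⟩
    rcases List.eq_nil_or_concat P with rfl | ⟨L, b, rfl⟩
    · simp at h1
    · simp only [List.concat_eq_append] at h1 h2 h3 ⊢
      rw [List.getLast?_concat] at h2
      obtain rfl : b = t := by simpa using h2
      rcases List.eq_nil_or_concat L with rfl | ⟨L', b', rfl⟩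
      · left
        refine ⟨?_, ?_⟩ <;> simp_all
      · simp only [List.concat_eq_append] at h1 h2 h3 ⊢
        right
        replace h3 := List.isChain_append.mp h3
        refine ⟨b', L' ++ [b'], ?_, ⟨?_, ?_, ?_⟩, rfl⟩
        · have := h3.2.2 b' (by simp [List.getLast?_concat]) b (by simp)
          tauto
        · simpa using h1
        · simp
        · exact h3.1
  · rintro (⟨rfl, rfl⟩ | ⟨t', P', hstep, ⟨h1, h2, h3⟩, rfl⟩)
    · exact ⟨rfl, rfl, List.isChain_singleton _⟩
    · have hne : P' ≠ [] := by rintro rfl; simp at h1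
      refine ⟨?_, ?_, ?_⟩
      · rw [List.head?_append]; simp [List.head?_eq_none_iff.not.mpr, h1]
      · simp [List.getLast?_concat]
      · simp only [List.Chain', List.isChain_append]
        refine ⟨h3, List.isChain_singleton _, ?_⟩
        intro x hx y hy
        simp at hy
        subst hy
        rw [h2] at hx
        simp at hx
        subst hx
        tauto

lemma monopath_bounds {s t : ℤ × ℤ} {P : List (ℤ × ℤ)} (h : MonoPath s t P) :
    ∀ p ∈ P, s.1 ≤ p.1 ∧ s.2 ≤ p.2 ∧ p.1 ≤ t.1 ∧ p.2 ≤ t.2 := by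
  induction P using List.reverseRecOn generalizing t with
  | nil => exact absurd h.1 (by simp)
  | append_singleton L b IH =>
    rcases monopath_structure.mp h with ⟨rfl, hP⟩ | ⟨t', P', hstep, h', hPe⟩
    · intro p hp
      rw [hP] at hp
      simp at hp
      subst hp
      exact ⟨le_refl _, le_refl _, le_refl _, le_refl _⟩
    · obtain ⟨hL, hbt⟩ : L = P' ∧ [b] = [t] := List.append_inj' hPe rfl
      have hb : t = b := by simpa using hbt.symm
      subst hb
      subst hL
      have ht1 : t'.1 ≤ t.1 ∧ t'.2 ≤ t.2 := by
        rcases hstep with rfl | rfl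
        · exact ⟨by show t'.1 ≤ t'.1 + 1; omega, le_refl _⟩
        · exact ⟨le_refl _, by show t'.2 ≤ t'.2 + 1; omega⟩
      intro p hp
      rcases List.mem_append.mp hp with hp | hp
      · obtain ⟨a1, a2, a3, a4⟩ := IH h' p hp
        exact ⟨a1, a2, le_trans a3 ht1.1, le_trans a4 ht1.2⟩
      · simp at hp
        subst hp
        have hs : s ∈ L := List.mem_of_mem_head? (by simp [h'.1])
        obtain ⟨_, _, a3, a4⟩ := IH h' s hs
        exact ⟨le_trans a3 ht1.1, le_trans a4 ht1.2, le_refl _, le_refl _⟩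

lemma monopath_le {s t : ℤ × ℤ} {P : List (ℤ × ℤ)} (h : MonoPath s t P) :
    s.1 ≤ t.1 ∧ s.2 ≤ t.2 := by
  have hs : s ∈ P := List.mem_of_mem_head? (by simp [h.1])
  obtain ⟨_, _, a3, a4⟩ := monopath_bounds h s hs
  exact ⟨a3, a4⟩

lemma monopath_self {s : ℤ × ℤ} {P : List (ℤ × ℤ)} : MonoPath s s P ↔ P = [s] := by
  constructor
  · intro h
    rcases monopath_structure.mp h with ⟨_, hP⟩ | ⟨t', P', hstep, h', hPe⟩
    · exact hP
    · exfalso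
      obtain ⟨l1, l2⟩ := monopath_le h'
      rcases hstep with h5 | h5
      · have := congrArg Prod.fst h5; simp at this; omega
      · have := congrArg Prod.snd h5; simp at this; omega
  · rintro rfl
    exact ⟨rfl, rfl, List.isChain_singleton _⟩

lemma monopath_set_split (m n : ℤ) (ht : ¬(m = 0 ∧ n = 0)) (Φ : List (ℤ × ℤ) → Prop)
    (hΦ : ∀ P, Φ (P ++ [((m : ℤ), (n : ℤ))]) ↔ Φ P) :
    {P : List (ℤ × ℤ) | MonoPath (0, 0) (m, n) P ∧ Φ P} =
      (fun P => P ++ [(m, n)]) '' ({P : List (ℤ × ℤ) | MonoPath (0, 0) (m - 1, n) P ∧ Φ P} ∪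
        {P : List (ℤ × ℤ) | MonoPath (0, 0) (m, n - 1) P ∧ Φ P}) := by
  ext P
  simp only [Set.mem_setOf_eq, Set.mem_image, Set.mem_union]
  constructor
  · rintro ⟨hmp, hφ⟩
    rcases monopath_structure.mp hmp with ⟨heq, rfl⟩ | ⟨t', P', hstep, h', rfl⟩
    · exact absurd ⟨(congrArg Prod.fst heq : m = 0), (congrArg Prod.snd heq : n = 0)⟩ ht
    · refine ⟨P', ?_, rfl⟩
      have hφ' : Φ P' := (hΦ P').mp hφ
      rcases hstep with h5 | h5
      · left
        rw [Prod.mk.injEq] at h5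
        have e : (m - 1, n) = t' := by
          rw [h5.1, h5.2]; show (t'.1 + 1 - 1, t'.2) = t'; rw [add_sub_cancel_right]
        rw [e]
        exact ⟨h', hφ'⟩
      · right
        rw [Prod.mk.injEq] at h5
        have e : (m, n - 1) = t' := by
          rw [h5.1, h5.2]; show (t'.1, t'.2 + 1 - 1) = t'; rw [add_sub_cancel_right]
        rw [e]
        exact ⟨h', hφ'⟩
  · rintro ⟨P', (⟨h', hφ'⟩ | ⟨h', hφ'⟩), rfl⟩
    · refine ⟨monopath_structure.mpr (Or.inr ⟨(m - 1, n), P', ?_, h', rfl⟩), (hΦ P').mpr hφ'⟩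
      left; show (m, n) = (m - 1 + 1, n); rw [sub_add_cancel]
    · refine ⟨monopath_structure.mpr (Or.inr ⟨(m, n - 1), P', ?_, h', rfl⟩), (hΦ P').mpr hφ'⟩
      right; show (m, n) = (m, n - 1 + 1); rw [sub_add_cancel]

lemma monopath_ncard_split (m n : ℤ) (ht : ¬(m = 0 ∧ n = 0)) (Φ : List (ℤ × ℤ) → Prop)
    (hΦ : ∀ P, Φ (P ++ [((m : ℤ), (n : ℤ))]) ↔ Φ P)
    (hf1 : {P : List (ℤ × ℤ) | MonoPath (0, 0) (m - 1, n) P ∧ Φ P}.Finite)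
    (hf2 : {P : List (ℤ × ℤ) | MonoPath (0, 0) (m, n - 1) P ∧ Φ P}.Finite) :
    {P : List (ℤ × ℤ) | MonoPath (0, 0) (m, n) P ∧ Φ P}.ncard =
      {P : List (ℤ × ℤ) | MonoPath (0, 0) (m - 1, n) P ∧ Φ P}.ncard +
      {P : List (ℤ × ℤ) | MonoPath (0, 0) (m, n - 1) P ∧ Φ P}.ncard := by
  have hinj : Function.Injective (fun P : List (ℤ × ℤ) => P ++ [(m, n)]) := by
    intro a b h
    simpa using congrArg List.dropLast h
  have hdisj : Disjoint {P : List (ℤ × ℤ) | MonoPath (0, 0) (m - 1, n) P ∧ Φ P}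
      {P : List (ℤ × ℤ) | MonoPath (0, 0) (m, n - 1) P ∧ Φ P} := by
    rw [Set.disjoint_left]
    rintro P ⟨h1, -⟩ ⟨h2, -⟩
    have e := h1.2.1.symm.trans h2.2.1
    simp only [Option.some.injEq, Prod.mk.injEq] at e
    omega
  rw [monopath_set_split m n ht Φ hΦ, Set.ncard_image_of_injective _ hinj,
    Set.ncard_union_eq hdisj hf1 hf2]

lemma monopath_empty {m n : ℤ} (h : m < 0 ∨ n < 0) :
    {P : List (ℤ × ℤ) | MonoPath (0, 0) (m, n) P} = ∅ := by
  rw [Set.eq_empty_iff_forall_notMem]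
  intro P hP
  obtain ⟨l1, l2⟩ := monopath_le hP
  simp at l1 l2
  omega

lemma monopath_finite (m n : ℤ) : {P : List (ℤ × ℤ) | MonoPath (0, 0) (m, n) P}.Finite := by
  suffices h : ∀ (c : ℕ) (m n : ℤ), (m + n).toNat ≤ c →
      {P : List (ℤ × ℤ) | MonoPath (0, 0) (m, n) P}.Finite from h (m + n).toNat m n le_rfl
  intro c
  induction c with
  | zero =>
    intro m n hc
    rcases lt_or_ge m 0 with h | h1
    · rw [monopath_empty (Or.inl h)]; exact Set.finite_empty
    rcases lt_or_ge n 0 with h | h2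
    · rw [monopath_empty (Or.inr h)]; exact Set.finite_empty
    obtain ⟨rfl, rfl⟩ : m = 0 ∧ n = 0 := by omega
    have : {P : List (ℤ × ℤ) | MonoPath (0, 0) ((0 : ℤ), (0 : ℤ)) P} = {[((0 : ℤ), (0 : ℤ))]} := by
      ext P; simp [monopath_self]
    rw [this]; exact Set.finite_singleton _
  | succ c IH =>
    intro m n hc
    rcases lt_or_ge m 0 with h | h1
    · rw [monopath_empty (Or.inl h)]; exact Set.finite_empty
    rcases lt_or_ge n 0 with h | h2
    · rw [monopath_empty (Or.inr h)]; exact Set.finite_empty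
    by_cases h0 : m = 0 ∧ n = 0
    · obtain ⟨rfl, rfl⟩ := h0
      have : {P : List (ℤ × ℤ) | MonoPath (0, 0) ((0 : ℤ), (0 : ℤ)) P} = {[((0 : ℤ), (0 : ℤ))]} := by
        ext P; simp [monopath_self]
      rw [this]; exact Set.finite_singleton _
    · have e : {P : List (ℤ × ℤ) | MonoPath (0, 0) (m, n) P} =
          {P : List (ℤ × ℤ) | MonoPath (0, 0) (m, n) P ∧ (fun _ => True) P} := by simp
      rw [e, monopath_set_split m n h0 _ (by simp)]
      apply Set.Finite.image
      apply Set.Finite.union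
      · exact Set.Finite.subset (IH (m - 1) n (by omega)) (fun P hP => hP.1)
      · exact Set.Finite.subset (IH m (n - 1) (by omega)) (fun P hP => hP.1)

lemma monopath_zero_set :
    {P : List (ℤ × ℤ) | MonoPath (0, 0) ((0 : ℤ), (0 : ℤ)) P} = {[((0 : ℤ), (0 : ℤ))]} := by
  ext P; simp [monopath_self]

lemma monopath_ncard_split_total (m n : ℤ) (ht : ¬(m = 0 ∧ n = 0)) :
    {P : List (ℤ × ℤ) | MonoPath (0, 0) (m, n) P}.ncard =
      {P : List (ℤ × ℤ) | MonoPath (0, 0) (m - 1, n) P}.ncard +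
      {P : List (ℤ × ℤ) | MonoPath (0, 0) (m, n - 1) P}.ncard := by
  have e : ∀ (a b : ℤ), {P : List (ℤ × ℤ) | MonoPath (0, 0) (a, b) P} =
      {P : List (ℤ × ℤ) | MonoPath (0, 0) (a, b) P ∧ (fun _ => True) P} := by
    intro a b; simp
  rw [e m n, e (m - 1) n, e m (n - 1)]
  exact monopath_ncard_split m n ht _ (by simp)
    (Set.Finite.subset (monopath_finite _ _) fun P hP => hP.1)
    (Set.Finite.subset (monopath_finite _ _) fun P hP => hP.1)

lemma totalN (M N : ℕ) :
    {P : List (ℤ × ℤ) | MonoPath (0, 0) ((M : ℤ), (N : ℤ)) P}.ncard = (M + N).choose M := by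
  suffices h : ∀ (c M N : ℕ), M + N ≤ c →
      {P : List (ℤ × ℤ) | MonoPath (0, 0) ((M : ℤ), (N : ℤ)) P}.ncard = (M + N).choose M from
    h (M + N) M N le_rfl
  intro c
  induction c with
  | zero =>
    intro M N h
    obtain ⟨rfl, rfl⟩ : M = 0 ∧ N = 0 := by omega
    simp only [Nat.cast_zero]
    rw [monopath_zero_set]
    simp
  | succ c IH =>
    intro M N h
    match M, N with
    | 0, 0 =>
      simp only [Nat.cast_zero]
      rw [monopath_zero_set]
      simp
    | 0, N + 1 =>
      rw [monopath_ncard_split_total _ _ (by push_cast <;> omega)]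
      rw [show {P : List (ℤ × ℤ) | MonoPath (0, 0) (((0 : ℕ) : ℤ) - 1, ((N + 1 : ℕ) : ℤ)) P} = ∅
        from monopath_empty (Or.inl (by push_cast <;> omega))]
      rw [show ((N + 1 : ℕ) : ℤ) - 1 = ((N : ℕ) : ℤ) by push_cast; ring]
      rw [IH 0 N (by omega)]
      simp
    | M + 1, 0 =>
      rw [monopath_ncard_split_total _ _ (by push_cast <;> omega)]
      rw [show {P : List (ℤ × ℤ) | MonoPath (0, 0) (((M + 1 : ℕ) : ℤ), ((0 : ℕ) : ℤ) - 1) P} = ∅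
        from monopath_empty (Or.inr (by push_cast <;> omega))]
      rw [show ((M + 1 : ℕ) : ℤ) - 1 = ((M : ℕ) : ℤ) by push_cast; ring]
      rw [IH M 0 (by omega)]
      simp
    | M + 1, N + 1 =>
      rw [monopath_ncard_split_total _ _ (by push_cast <;> omega)]
      rw [show ((M + 1 : ℕ) : ℤ) - 1 = ((M : ℕ) : ℤ) by push_cast; ring]
      rw [show ((N + 1 : ℕ) : ℤ) - 1 = ((N : ℕ) : ℤ) by push_cast; ring]
      rw [IH M (N + 1) (by omega), IH (M + 1) N (by omega)]
      have : (M + 1) + (N + 1) = ((M + (N + 1)) + 1) := by omega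
      rw [this, Nat.choose_succ_succ' (M + (N + 1)) M]
      congr 1
      · congr 1; omega

lemma mem_of_getLast?_eq {α : Type*} {l : List α} {a : α} (h : l.getLast? = some a) : a ∈ l := by
  obtain ⟨hne, rfl⟩ := List.mem_getLast?_eq_getLast h
  exact List.getLast_mem hne

lemma bad_empty_col (k n : ℤ) :
    {P : List (ℤ × ℤ) | MonoPath (0, 0) ((0 : ℤ), n) P ∧ ∃ q ∈ P, q.2 < k * q.1} = ∅ := by
  rw [Set.eq_empty_iff_forall_notMem]
  rintro P ⟨hmp, q, hq, hlt⟩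
  obtain ⟨b1, b2, b3, b4⟩ := monopath_bounds hmp q hq
  have b1' : (0 : ℤ) ≤ q.1 := b1
  have b2' : (0 : ℤ) ≤ q.2 := b2
  have b3' : q.1 ≤ 0 := b3
  have : q.1 = 0 := le_antisymm b3' b1'
  rw [this, mul_zero] at hlt
  omega

lemma bad_full (k m n : ℤ) (hbad : n < k * m) :
    {P : List (ℤ × ℤ) | MonoPath (0, 0) (m, n) P ∧ ∃ q ∈ P, q.2 < k * q.1} =
      {P : List (ℤ × ℤ) | MonoPath (0, 0) (m, n) P} := by
  ext P
  simp only [Set.mem_setOf_eq, and_iff_left_iff_imp]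
  intro hmp
  exact ⟨(m, n), mem_of_getLast?_eq hmp.2.1, hbad⟩

lemma monopath_ncard_split_bad (k m n : ℤ) (ht : ¬(m = 0 ∧ n = 0)) (hgood : k * m ≤ n) :
    {P : List (ℤ × ℤ) | MonoPath (0, 0) (m, n) P ∧ ∃ q ∈ P, q.2 < k * q.1}.ncard =
      {P : List (ℤ × ℤ) | MonoPath (0, 0) (m - 1, n) P ∧ ∃ q ∈ P, q.2 < k * q.1}.ncard +
      {P : List (ℤ × ℤ) | MonoPath (0, 0) (m, n - 1) P ∧ ∃ q ∈ P, q.2 < k * q.1}.ncard := by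
  apply monopath_ncard_split m n ht
  · intro P
    constructor
    · rintro ⟨q, hq, hlt⟩
      rcases List.mem_append.mp hq with hq | hq
      · exact ⟨q, hq, hlt⟩
      · exfalso
        simp only [List.mem_singleton] at hq
        subst hq
        exact absurd hlt (not_lt.mpr hgood)
    · rintro ⟨q, hq, hlt⟩
      exact ⟨q, List.mem_append_left _ hq, hlt⟩
  · exact Set.Finite.subset (monopath_finite _ _) fun P hP => hP.1
  · exact Set.Finite.subset (monopath_finite _ _) fun P hP => hP.1

lemma IC_cast (M N : ℕ) (h : 1 ≤ M) :
    IC ((M : ℤ) + (N : ℤ)) ((M : ℤ) - 1) = (M + N).choose (M - 1) := by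
  unfold IC
  rw [if_neg (by omega)]
  congr 1 <;> omega

lemma IC_zero_s4 (N : ℕ) : IC (((0 : ℕ) : ℤ) + (N : ℤ)) (((0 : ℕ) : ℤ) - 1) = 0 := by
  unfold IC
  rw [if_pos (by omega)]

lemma choose_ratio (n m : ℕ) (k : ℤ) (hmn : m ≤ n) (h : (n : ℤ) - (m : ℤ) = k * ((m : ℤ) + 1)) :
    (n.choose (m + 1) : ℤ) = k * (n.choose m : ℤ) := by
  have h1 : (n.choose (m + 1) : ℤ) * ((m : ℤ) + 1) = (n.choose m : ℤ) * ((n : ℤ) - (m : ℤ)) := by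
    have h0 := Nat.choose_succ_right_eq n m
    have : ((n.choose (m + 1) * (m + 1) : ℕ) : ℤ) = ((n.choose m * (n - m) : ℕ) : ℤ) := by
      exact_mod_cast h0
    push_cast [hmn] at this
    linarith
  rw [h] at h1
  have hne : ((m : ℤ) + 1) ≠ 0 := by positivity
  have h2 : (n.choose (m + 1) : ℤ) * ((m : ℤ) + 1) = (k * (n.choose m : ℤ)) * ((m : ℤ) + 1) := by
    rw [h1]; ring
  exact mul_right_cancel₀ hne h2

lemma arithA (k : ℤ) (M N : ℕ) (hM : 1 ≤ M) (hN : 1 ≤ N) :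
    k * (IC ((M : ℤ) - 1 + (N : ℤ)) ((M : ℤ) - 1 - 1) : ℤ)
      + k * (IC ((M : ℤ) + ((N - 1 : ℕ) : ℤ)) ((M : ℤ) - 1) : ℤ)
      = k * (IC ((M : ℤ) + (N : ℤ)) ((M : ℤ) - 1) : ℤ) := by
  rw [show (M : ℤ) - 1 + (N : ℤ) = ((M - 1 : ℕ) : ℤ) + (N : ℤ) by omega,
    show (M : ℤ) - 1 - 1 = ((M - 1 : ℕ) : ℤ) - 1 by omega]
  obtain ⟨N', rfl⟩ : ∃ N', N = N' + 1 := ⟨N - 1, by omega⟩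
  rcases Nat.lt_or_ge M 2 with h2 | h2
  · obtain rfl : M = 1 := by omega
    rw [show (1 - 1 : ℕ) = 0 from rfl, IC_zero_s4, IC_cast 1 (N' + 1 - 1) le_rfl,
      IC_cast 1 (N' + 1) le_rfl]
    simp [Nat.choose_zero_right]
  · obtain ⟨M', rfl⟩ : ∃ M', M = M' + 2 := ⟨M - 2, by omega⟩
    rw [IC_cast _ _ (by omega), IC_cast _ _ (by omega), IC_cast _ _ (by omega)]
    rw [show (M' + 2 - 1 : ℕ) = M' + 1 from rfl, show (M' + 1 - 1 : ℕ) = M' from rfl,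
      show (N' + 1 - 1 : ℕ) = N' from rfl]
    rw [show M' + 1 + (N' + 1) = M' + N' + 2 by omega,
      show M' + 2 + N' = M' + N' + 2 by omega,
      show M' + 2 + (N' + 1) = M' + N' + 2 + 1 by omega]
    rw [Nat.choose_succ_succ' (M' + N' + 2) M']
    push_cast
    ring

lemma arithB (k : ℤ) (hk : 1 ≤ k) (M N : ℕ) (hM : 1 ≤ M) (hN : (N : ℤ) = k * (M : ℤ)) :
    k * (IC ((M : ℤ) - 1 + (N : ℤ)) ((M : ℤ) - 1 - 1) : ℤ)
      + ((M + (N - 1)).choose M : ℤ)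
      = k * (IC ((M : ℤ) + (N : ℤ)) ((M : ℤ) - 1) : ℤ) := by
  rw [show (M : ℤ) - 1 + (N : ℤ) = ((M - 1 : ℕ) : ℤ) + (N : ℤ) by omega,
    show (M : ℤ) - 1 - 1 = ((M - 1 : ℕ) : ℤ) - 1 by omega]
  have hMz : (1 : ℤ) ≤ (M : ℤ) := by exact_mod_cast hM
  have hN1 : 1 ≤ N := by
    have : (1 : ℤ) ≤ (N : ℤ) := by nlinarith
    exact_mod_cast this
  obtain ⟨M'', rfl⟩ : ∃ M'', M = M'' + 1 := ⟨M - 1, by omega⟩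
  rw [show (M'' + 1 - 1 : ℕ) = M'' from rfl]
  have hratio : ((M'' + 1 + (N - 1)).choose (M'' + 1) : ℤ)
      = k * ((M'' + 1 + (N - 1)).choose M'' : ℤ) := by
    apply choose_ratio _ _ _ (by omega)
    push_cast [hN1]
    push_cast at hN
    linarith
  rw [hratio]
  rcases Nat.eq_zero_or_pos M'' with rfl | hM2
  · rw [IC_zero_s4, IC_cast 1 N le_rfl]
    rw [show (0 + 1 + (N - 1)) = N by omega, show (1 + N).choose (1 - 1) = 1 from
      Nat.choose_zero_right _]
    simp
  · obtain ⟨M''', rfl⟩ : ∃ M''', M'' = M''' + 1 := ⟨M'' - 1, by omega⟩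
    rw [IC_cast _ _ (by omega), IC_cast _ _ (by omega)]
    rw [show (M''' + 1 + 1 - 1 : ℕ) = M''' + 1 from rfl, show (M''' + 1 - 1 : ℕ) = M''' from rfl]
    rw [show M''' + 1 + 1 + (N - 1) = M''' + 1 + N by omega,
      show M''' + 1 + 1 + N = (M''' + 1 + N) + 1 by omega]
    rw [Nat.choose_succ_succ' (M''' + 1 + N) M''']
    push_cast
    ring

lemma badN (k : ℤ) (hk : 1 ≤ k) :
    ∀ (c M N : ℕ), M + N ≤ c → k * (M : ℤ) ≤ (N : ℤ) →
    ({P : List (ℤ × ℤ) | MonoPath (0, 0) ((M : ℤ), (N : ℤ)) P ∧ ∃ q ∈ P, q.2 < k * q.1}.ncard : ℤ)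
      = k * (IC ((M : ℤ) + (N : ℤ)) ((M : ℤ) - 1) : ℤ) := by
  have base : ∀ N : ℕ,
      ({P : List (ℤ × ℤ) | MonoPath (0, 0) (((0 : ℕ) : ℤ), (N : ℤ)) P ∧
        ∃ q ∈ P, q.2 < k * q.1}.ncard : ℤ)
      = k * (IC (((0 : ℕ) : ℤ) + (N : ℤ)) (((0 : ℕ) : ℤ) - 1) : ℤ) := by
    intro N
    rw [IC_zero_s4]
    simp only [Nat.cast_zero]
    rw [bad_empty_col]
    simp
  intro c
  induction c with
  | zero =>
    intro M N h1 h2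
    obtain rfl : M = 0 := by omega
    exact base N
  | succ c IH =>
    intro M N h1 h2
    rcases Nat.eq_zero_or_pos M with rfl | hM
    · exact base N
    · have hMz : (1 : ℤ) ≤ (M : ℤ) := by exact_mod_cast hM
      have hN : 1 ≤ N := by
        have : (1 : ℤ) ≤ (N : ℤ) := le_trans (by nlinarith) h2
        exact_mod_cast this
      rw [monopath_ncard_split_bad k _ _ (by omega) h2]
      rw [show (M : ℤ) - 1 = ((M - 1 : ℕ) : ℤ) by omega,
        show (N : ℤ) - 1 = ((N - 1 : ℕ) : ℤ) by omega]
      rw [Nat.cast_add]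
      rw [IH (M - 1) N (by omega) (by
        have : ((M - 1 : ℕ) : ℤ) = (M : ℤ) - 1 := by omega
        rw [this]
        nlinarith)]
      by_cases hc : k * ((M : ℕ) : ℤ) ≤ ((N - 1 : ℕ) : ℤ)
      · rw [IH M (N - 1) (by omega) hc]
        rw [show ((M - 1 : ℕ) : ℤ) = (M : ℤ) - 1 by omega]
        exact arithA k M N hM hN
      · have hbad : ((N - 1 : ℕ) : ℤ) < k * ((M : ℕ) : ℤ) := not_le.mp hc
        have hNk : (N : ℤ) = k * (M : ℤ) := by
          have e1 : ((N - 1 : ℕ) : ℤ) = (N : ℤ) - 1 := by omega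
          rw [e1] at hbad
          have : (N : ℤ) ≤ k * M := by linarith
          linarith
        rw [bad_full k _ _ (by exact hbad)]
        rw [totalN M (N - 1)]
        rw [show ((M - 1 : ℕ) : ℤ) = (M : ℤ) - 1 by omega]
        exact arithB k hk M N hM hNk

theorem stmt4 (k m n : ℤ) (hk : 1 ≤ k) (hm : 0 ≤ m) (hn : k * m ≤ n) :
    (Set.ncard {P : List (ℤ × ℤ) | MonoPath (0, 0) (m, n) P ∧ ∃ q ∈ P, q.2 < k * q.1} : ℤ) =
      k * (IC (m + n) (m - 1) : ℤ) := by
  obtain ⟨M, rfl⟩ : ∃ M : ℕ, m = (M : ℤ) := ⟨m.toNat, (Int.toNat_of_nonneg hm).symm⟩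
  have hn0 : 0 ≤ n := le_trans (mul_nonneg (by omega) (by positivity)) hn
  obtain ⟨N, rfl⟩ : ∃ N : ℕ, n = (N : ℤ) := ⟨n.toNat, (Int.toNat_of_nonneg hn0).symm⟩
  exact badN k hk (M + N) M N le_rfl hn
end

section
/- Let k, r, a, b, m, n be integers with k ≥ 1, 0 ≤ a ≤ m, b ≤ n, kb ≥ max{0, a − kr}, and kn ≥ m − kr. Then the number of monotone lattice paths from (a,b) to (m,n) staying weakly above the line y = x/k − r equals the number of monotone lattice paths from (0, k(n+r)−m) to (n−b, k(n+r)−a) staying weakly above the line y = kx. -/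
/-!
The map `T (x, y) = (n - y, k(n + r) - x)`, applied pointwise to a path which is then read
backwards, is a bijection between the two families of paths: `T` reverses unit steps while
exchanging horizontal and vertical ones, swaps the endpoints `(a, b), (m, n)` with
`(n - b, k(n + r) - a), (0, k(n + r) - m)`, and turns the condition `x - kr ≤ ky` into `kx' ≤ y'`.
-/

open Finset

/-- Number of monotone lattice paths from `(a,b)` to `(m,n)` staying weakly above `y = x/k - r`. -/
noncomputable def NWinv (k r a b m n : ℤ) : ℕ :=
  Set.ncard {P : List (ℤ × ℤ) | MonoPath (a, b) (m, n) P ∧ ∀ p ∈ P, p.1 - k * r ≤ k * p.2}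

def IsUnitStep (p q : ℤ × ℤ) : Prop := q = (p.1 + 1, p.2) ∨ q = (p.1, p.2 + 1)

theorem monoPath_iff_s10 (s t : ℤ × ℤ) (P : List (ℤ × ℤ)) :
    MonoPath s t P ↔ P.head? = some s ∧ P.getLast? = some t ∧ P.IsChain IsUnitStep :=
  Iff.rfl

theorem monoPath_reverse_map_iff (e : ℤ × ℤ ≃ ℤ × ℤ)
    (he : ∀ p q, IsUnitStep (e q) (e p) ↔ IsUnitStep p q) (s t : ℤ × ℤ) (P : List (ℤ × ℤ)) :
    MonoPath (e t) (e s) (P.map e).reverse ↔ MonoPath s t P := by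
  have map_eq_some_iff : ∀ (o : Option (ℤ × ℤ)) x, o.map e = some (e x) ↔ o = some x :=
    fun o x => (Option.map_injective e.injective).eq_iff (b := some x)
  rw [monoPath_iff_s10, monoPath_iff_s10, List.head?_reverse, List.getLast?_reverse, List.head?_map,
    List.getLast?_map, map_eq_some_iff, map_eq_some_iff, List.isChain_reverse, List.isChain_map]
  simp only [he]
  tauto

theorem ncard_preimage_reverse_map {α : Type*} (e : α ≃ α) (S : Set (List α)) :
    ((fun P : List α => (P.map e).reverse) ⁻¹' S).ncard = S.ncard := by
  refine Set.ncard_preimage_of_injective_subset_range ?_ fun Q _ => ⟨Q.reverse.map e.symm, ?_⟩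
  · exact List.reverse_injective.comp (List.map_injective_iff.mpr e.injective)
  · simp [Function.comp_def]

@[simps]
def rotReflect (u v : ℤ) : ℤ × ℤ ≃ ℤ × ℤ where
  toFun p := (u - p.2, v - p.1)
  invFun q := (v - q.2, u - q.1)
  left_inv p := by simp
  right_inv q := by simp

theorem isUnitStep_rotReflect_iff (u v : ℤ) (p q : ℤ × ℤ) :
    IsUnitStep (rotReflect u v q) (rotReflect u v p) ↔ IsUnitStep p q := by
  simp only [IsUnitStep, rotReflect_apply, Prod.ext_iff]
  omega

theorem le_rotReflect_iff (k r n : ℤ) (p : ℤ × ℤ) :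
    k * (rotReflect n (k * (n + r)) p).1 - 0 ≤ (rotReflect n (k * (n + r)) p).2 ↔
      p.1 - k * r ≤ k * p.2 := by
  simp only [rotReflect_apply]
  constructor <;> intro h <;> linarith

theorem stmt10_general (k r a b m n : ℤ) :
    NWinv k r a b m n = NW k 0 0 (k * (n + r) - m) (n - b) (k * (n + r) - a) := by
  set T := rotReflect n (k * (n + r))
  rw [NWinv, NW, eq_comm, ← ncard_preimage_reverse_map T]
  congr 1
  ext P
  simp only [Set.mem_preimage, Set.mem_ofPred_eq, List.mem_reverse, List.mem_map,
    forall_exists_index, and_imp, forall_apply_eq_imp_iff₂]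
  rw [show ((0 : ℤ), k * (n + r) - m) = T (m, n) by simp [T],
    show (n - b, k * (n + r) - a) = T (a, b) from rfl,
    monoPath_reverse_map_iff T (isUnitStep_rotReflect_iff _ _)]
  exact and_congr_right' (forall₂_congr fun p _ => le_rotReflect_iff k r n p)

theorem stmt10 (k r a b m n : ℤ) (hk : 1 ≤ k) (ha : 0 ≤ a) (ham : a ≤ m) (hbn : b ≤ n)
    (hb1 : 0 ≤ k * b) (hb2 : a - k * r ≤ k * b) (hn : m - k * r ≤ k * n) :
    NWinv k r a b m n = NW k 0 0 (k * (n + r) - m) (n - b) (k * (n + r) - a) :=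
  stmt10_general k r a b m n
end

section
/- For positive integers m, n, p, c with m ≥ pn and c + pn > m, the number of lattice paths from (0,0) to (m−pn, m+n) using steps (1,1) and (−p,1) that never contain a point on the line x = c equals the number of monotone lattice paths from (0,0) to (n,m) using steps (1,0) and (0,1) that stay strictly above the line y = px − (c+pn−m). -/
open Finset

/-- A lattice path using steps `(1,1)` and `(-p,1)`. -/
def KPath (p : ℤ) (s t : ℤ × ℤ) (P : List (ℤ × ℤ)) : Prop :=
  P.head? = some s ∧ P.getLast? = some t ∧
  P.Chain' (fun u v => v = (u.1 + 1, u.2 + 1) ∨ v = (u.1 - p, u.2 + 1))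

/-!
Read a monotone path from `(0,0)` to `(n,m)` backwards, rotated by 180° about `(n/2, m/2)` and
sheared by `(x, y) ↦ (y - p x, x + y)`: this is `kPoint`, and it turns the unit steps into the
steps `(1,1)` and `(-p,1)`. It is injective, and its image is the set of lattice points with
`p + 1 ∣ y - x`, which contains every point of a K-path from the origin; so it gives a bijection
between the two kinds of paths.
A K-path starts at `x = 0 < c` and moves right by at most one unit per step, so avoiding the line
`x = c` means staying in `x < c`; under `kPoint` this is the strict condition `y > p x - r`.
-/

theorem List.IsChain.forall_mem_of_head? {α : Type*} {R : α → α → Prop} {P : α → Prop}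
    {l : List α} {s : α} (hl : l.IsChain R) (hs : l.head? = some s) (hP : P s)
    (carries : ∀ ⦃x y⦄, x ∈ l → y ∈ l → R x y → P x → P y) : ∀ q ∈ l, P q := by
  obtain ⟨t, rfl⟩ := List.head?_eq_some_iff.mp hs
  rw [List.IsChain.iff_mem] at hl
  rintro q (_ | ⟨_, hq⟩)
  · exact hP
  · exact hl.cons_induction P _ (fun x y hxy => carries hxy.1 hxy.2.1 hxy.2.2) hP q hq

section KPoint

variable (p m n : ℤ)

def kPoint (q : ℤ × ℤ) : ℤ × ℤ :=
  (m - q.2 - p * (n - q.1), (n - q.1) + (m - q.2))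

variable {p m n}

theorem kPoint_injective (hp : p + 1 ≠ 0) : Function.Injective (kPoint p m n) := by
  intro q q' h
  simp only [kPoint, Prod.ext_iff] at h
  have h1 : (p + 1) * (q.1 - q'.1) = 0 := by linear_combination h.1 - h.2
  have h2 : q.1 = q'.1 := by
    simpa [sub_eq_zero] using (mul_eq_zero.mp h1).resolve_left hp
  exact Prod.ext h2 (by omega)

theorem kPoint_add_fst (q : ℤ × ℤ) :
    kPoint p m n (q.1 + 1, q.2) = ((kPoint p m n q).1 + p, (kPoint p m n q).2 - 1) := by
  simp only [kPoint, Prod.ext_iff]; constructor <;> ring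

theorem kPoint_add_snd (q : ℤ × ℤ) :
    kPoint p m n (q.1, q.2 + 1) = ((kPoint p m n q).1 - 1, (kPoint p m n q).2 - 1) := by
  simp only [kPoint, Prod.ext_iff]; constructor <;> ring

theorem kPoint_step_iff (hp : p + 1 ≠ 0) (u v : ℤ × ℤ) :
    (kPoint p m n u = ((kPoint p m n v).1 + 1, (kPoint p m n v).2 + 1) ∨
        kPoint p m n u = ((kPoint p m n v).1 - p, (kPoint p m n v).2 + 1)) ↔
      (v = (u.1 + 1, u.2) ∨ v = (u.1, u.2 + 1)) := by
  constructor
  · rintro (h | h)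
    · right
      apply kPoint_injective hp
      rw [kPoint_add_snd, h]
      simp
    · left
      apply kPoint_injective hp
      rw [kPoint_add_fst, h]
      simp
  · rintro (rfl | rfl)
    · right
      rw [kPoint_add_fst]
      simp
    · left
      rw [kPoint_add_snd]
      simp

theorem mem_range_kPoint {q : ℤ × ℤ} (hq : p + 1 ∣ q.2 - q.1) : q ∈ Set.range (kPoint p m n) := by
  obtain ⟨d, hd⟩ := hq
  refine ⟨(n - d, m + d - q.2), ?_⟩
  simp only [kPoint, Prod.ext_iff]
  constructor
  · linear_combination hd
  · ring

theorem kPoint_fst_lt_iff (c : ℤ) (q : ℤ × ℤ) :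
    (kPoint p m n q).1 < c ↔ p * q.1 - (c + p * n - m) < q.2 := by
  simp only [kPoint]
  constructor <;> intro h <;> linarith

theorem kPoint_zero : kPoint p m n (0, 0) = (m - p * n, m + n) := by
  simp only [kPoint, Prod.ext_iff]; constructor <;> ring

theorem kPoint_self : kPoint p m n (n, m) = (0, 0) := by
  simp [kPoint]

theorem kPath_map_reverse_iff (hp : p + 1 ≠ 0) (s t : ℤ × ℤ) (Q : List (ℤ × ℤ)) :
    KPath p (kPoint p m n t) (kPoint p m n s) (Q.map (kPoint p m n)).reverse ↔ MonoPath s t Q := by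
  have map_eq_some (o : Option (ℤ × ℤ)) (a : ℤ × ℤ) :
      o.map (kPoint p m n) = some (kPoint p m n a) ↔ o = some a :=
    (Option.map_injective (kPoint_injective hp)).eq_iff (b := some a)
  simp only [KPath, MonoPath, List.head?_reverse, List.getLast?_reverse, List.getLast?_map,
    List.head?_map, map_eq_some]
  rw [and_left_comm]
  exact and_congr_right' <| and_congr_right' <|
    (List.isChain_reverse.trans (List.isChain_map _)).trans (List.IsChain.iff (kPoint_step_iff hp))

end KPoint

namespace KPath

variable {p : ℤ} {s t : ℤ × ℤ} {P : List (ℤ × ℤ)}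

theorem dvd_snd_sub_fst (hP : KPath p s t P) (hs : p + 1 ∣ s.2 - s.1) :
    ∀ q ∈ P, p + 1 ∣ q.2 - q.1 := by
  refine List.IsChain.forall_mem_of_head? hP.2.2 hP.1 hs ?_
  rintro u v - - (rfl | rfl) h
  · simpa using h
  · have : u.2 + 1 - (u.1 - p) = u.2 - u.1 + (p + 1) := by ring
    simpa [this] using dvd_add h dvd_rfl

theorem fst_lt_of_forall_ne {c : ℤ} (hp : 0 ≤ p) (hP : KPath p s t P) (hs : s.1 < c)
    (havoid : ∀ q ∈ P, q.1 ≠ c) : ∀ q ∈ P, q.1 < c := by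
  refine List.IsChain.forall_mem_of_head? hP.2.2 hP.1 hs ?_
  rintro u v - hv (rfl | rfl) hu
  · have := havoid _ hv
    dsimp only at this ⊢
    omega
  · dsimp only
    omega

end KPath

theorem kPath_avoiding_eq_image {p m n c : ℤ} (hp : 0 ≤ p) (hc : 0 < c) :
    {P : List (ℤ × ℤ) | KPath p (0, 0) (m - p * n, m + n) P ∧ ∀ q ∈ P, q.1 ≠ c} =
      (fun Q => (Q.map (kPoint p m n)).reverse) ''
        {Q | MonoPath (0, 0) (n, m) Q ∧ ∀ q ∈ Q, p * q.1 - (c + p * n - m) < q.2} := by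
  have hp1 : p + 1 ≠ 0 := by omega
  ext P
  constructor
  · rintro ⟨hP, havoid⟩
    obtain ⟨Q, rfl⟩ : P ∈ Set.range (List.map (kPoint p m n)) := by
      rw [Set.range_list_map]
      exact fun q hq => mem_range_kPoint (hP.dvd_snd_sub_fst (by simp) q hq)
    refine ⟨Q.reverse, ⟨?_, fun q hq => ?_⟩, by simp⟩
    · rw [← kPath_map_reverse_iff hp1, kPoint_self, kPoint_zero]
      simpa using hP
    · rw [← kPoint_fst_lt_iff]
      exact hP.fst_lt_of_forall_ne hp hc havoid _ (List.mem_map_of_mem (List.mem_reverse.mp hq))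
  · rintro ⟨Q, ⟨hQ, habove⟩, rfl⟩
    refine ⟨?_, ?_⟩
    · have hK := (kPath_map_reverse_iff (m := m) (n := n) hp1 (0, 0) (n, m) Q).mpr hQ
      rwa [kPoint_self, kPoint_zero] at hK
    · simp only [List.mem_reverse, List.mem_map]
      rintro _ ⟨q, hq, rfl⟩
      exact ((kPoint_fst_lt_iff c q).mpr (habove q hq)).ne

theorem stmt13_general (m n p c : ℤ) (hp : 1 ≤ p) (hc : 1 ≤ c) :
    Set.ncard {P : List (ℤ × ℤ) |
        KPath p (0, 0) (m - p * n, m + n) P ∧ ∀ q ∈ P, q.1 ≠ c} =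
      NS p (c + p * n - m) 0 0 n m := by
  have hinj : Function.Injective fun Q : List (ℤ × ℤ) => (Q.map (kPoint p m n)).reverse :=
    List.reverse_injective.comp (List.map_injective_iff.mpr (kPoint_injective (by omega)))
  rw [kPath_avoiding_eq_image (by omega) (by omega), Set.ncard_image_of_injective _ hinj]
  rfl

theorem stmt13 (m n p c : ℤ) (hm : 1 ≤ m) (hn : 1 ≤ n) (hp : 1 ≤ p) (hc : 1 ≤ c)
    (h1 : p * n ≤ m) (h2 : m < c + p * n) :
    Set.ncard {P : List (ℤ × ℤ) |
        KPath p (0, 0) (m - p * n, m + n) P ∧ ∀ q ∈ P, q.1 ≠ c} =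
      NS p (c + p * n - m) 0 0 n m :=
  stmt13_general m n p c hp hc
end

section
/- For all real numbers (or integers) α, β, γ and any nonnegative integer n, the Hagen–Rothe identity holds: the sum over i from 0 to n of (γ/(γ+βi)) · C(γ+βi, i) · C(α+β(n−i), n−i) equals C(α+γ+βn, n), provided γ+βi ≠ 0 for 0 ≤ i ≤ n so all terms are defined. -/
/-! The summand `γ / (γ + β i) * C(γ + β i, i)` agrees, wherever it is defined, with
`C(γ + β i, i) - β * C(γ + β i - 1, i - 1)`, a polynomial in `γ`. By Pascal's rule, replacing `γ`
by `γ - 1` changes the sum for `n + 1` by the sum for `n` taken at `γ + β - 1`, and it changes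
`C(α + γ + β (n + 1), n + 1)` in the same way; so by induction on `n` the difference of the two
sides is a polynomial in `γ` of period 1. At `γ = 0` only the term `i = 0` survives, so the
difference vanishes at every natural number and hence identically. -/

open Finset Polynomial

namespace Ring

variable {R : Type*} [CommRing R] [BinomialRing R]

theorem succ_nsmul_choose_succ (r : R) (k : ℕ) :
    (k + 1) • choose r (k + 1) = r * choose (r - 1) k := by
  simpa [choose_one_right] using choose_smul_choose r (Nat.le_add_left 1 k)

theorem choose_sub_choose_sub_one (r : R) (k : ℕ) :
    choose r (k + 1) - choose (r - 1) (k + 1) = choose (r - 1) k := by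
  rw [sub_eq_iff_eq_add, ← choose_succ_succ, sub_add_cancel]

end Ring

section BinomialRing

variable {R S : Type*} [CommRing R] [BinomialRing R] [CommRing S] [BinomialRing S]

noncomputable def rotheCoeff (β γ : R) : ℕ → R
  | 0 => 1
  | i + 1 =>
    Ring.choose (γ + β * (i + 1 : ℕ)) (i + 1) - β * Ring.choose (γ + β * (i + 1 : ℕ) - 1) i

noncomputable def rotheSum (α β γ : R) (n : ℕ) : R :=
  ∑ i ∈ range (n + 1), rotheCoeff β γ i * Ring.choose (α + β * (n - i : ℕ)) (n - i)

theorem map_rotheCoeff (f : R →+* S) (β γ : R) (i : ℕ) :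
    f (rotheCoeff β γ i) = rotheCoeff (f β) (f γ) i := by
  cases i <;> simp [rotheCoeff, Ring.map_choose]

theorem map_rotheSum (f : R →+* S) (α β γ : R) (n : ℕ) :
    f (rotheSum α β γ n) = rotheSum (f α) (f β) (f γ) n := by
  simp [rotheSum, map_rotheCoeff, Ring.map_choose]

theorem add_mul_rotheCoeff (β γ : R) (i : ℕ) :
    (γ + β * i) * rotheCoeff β γ i = γ * Ring.choose (γ + β * i) i := by
  cases i with
  | zero => simp [rotheCoeff]
  | succ i =>
    have h := Ring.succ_nsmul_choose_succ (γ + β * (i + 1 : ℕ)) i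
    rw [nsmul_eq_mul] at h
    simp only [rotheCoeff]
    push_cast at h ⊢
    linear_combination β * h

attribute [local instance] BinomialRing.toIsAddTorsionFree in
theorem rotheCoeff_zero_succ (β : R) (i : ℕ) : rotheCoeff β 0 (i + 1) = 0 := by
  apply nsmul_right_injective i.succ_ne_zero
  have h := Ring.succ_nsmul_choose_succ (β * (i + 1 : ℕ)) i
  simp only [rotheCoeff, zero_add, smul_sub, h, nsmul_eq_mul, smul_zero]
  push_cast
  ring

theorem rotheCoeff_succ_sub (β γ : R) (i : ℕ) :
    rotheCoeff β γ (i + 1) - rotheCoeff β (γ - 1) (i + 1) = rotheCoeff β (γ + β - 1) i := by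
  cases i with
  | zero => simp [rotheCoeff]
  | succ j =>
    simp only [rotheCoeff]
    push_cast
    set x := γ + β * (j + 1 + 1)
    rw [show γ - 1 + β * (j + 1 + 1) = x - 1 by ring, show γ + β - 1 + β * (j + 1) = x - 1 by ring]
    linear_combination Ring.choose_sub_choose_sub_one x (j + 1) -
      β * Ring.choose_sub_choose_sub_one (x - 1) j

theorem rotheSum_succ_sub (α β γ : R) (n : ℕ) :
    rotheSum α β γ (n + 1) - rotheSum α β (γ - 1) (n + 1) = rotheSum α β (γ + β - 1) n := by
  simp only [rotheSum, sum_range_succ' _ (n + 1), ← rotheCoeff_succ_sub, sub_mul, sum_sub_distrib,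
    Nat.add_sub_add_right]
  simp [rotheCoeff]

theorem rotheSum_zero (α β : R) (n : ℕ) : rotheSum α β 0 n = Ring.choose (α + β * n) n := by
  rw [rotheSum, sum_range_succ', sum_eq_zero fun i _ ↦ by rw [rotheCoeff_zero_succ, zero_mul]]
  simp [rotheCoeff]

end BinomialRing

section Field

variable {K : Type*} [Field K] [CharZero K]

theorem Polynomial.eq_zero_of_forall_eval_natCast_eq_zero {p : K[X]}
    (h : ∀ m : ℕ, p.eval (m : K) = 0) : p = 0 :=
  p.eq_zero_of_infinite_isRoot (Set.infinite_of_injective_forall_mem Nat.cast_injective h)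

theorem rotheCoeff_eq_div_mul_choose {β γ : K} {i : ℕ} (h : γ + β * i ≠ 0) :
    rotheCoeff β γ i = γ / (γ + β * i) * Ring.choose (γ + β * i) i := by
  rw [div_mul_eq_mul_div, ← add_mul_rotheCoeff, mul_div_cancel_left₀ _ h]

theorem rotheSum_eq_choose (α β γ : K) (n : ℕ) :
    rotheSum α β γ n = Ring.choose (α + γ + β * n) n := by
  induction n generalizing γ with
  | zero => simp [rotheSum, rotheCoeff]
  | succ n ih =>
    set P : K[X] := rotheSum (C α) (C β) X (n + 1) -
      Ring.choose (C α + X + C β * ((n + 1 : ℕ) : K[X])) (n + 1)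
    have hP : ∀ x, P.eval x =
        rotheSum α β x (n + 1) - Ring.choose (α + x + β * (n + 1 : ℕ)) (n + 1) := by
      intro x
      rw [← coe_evalRingHom, map_sub, map_rotheSum, Ring.map_choose]
      simp
    have hshift : ∀ x, P.eval x = P.eval (x - 1) := by
      intro x
      set y := α + x + β * (n + 1 : ℕ) with hy
      have hpascal := Ring.choose_sub_choose_sub_one y n
      have ih' := ih (x + β - 1)
      rw [show α + (x + β - 1) + β * n = y - 1 by rw [hy]; push_cast; ring] at ih'
      rw [hP, hP, show α + (x - 1) + β * (n + 1 : ℕ) = y - 1 by ring]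
      linear_combination rotheSum_succ_sub α β x n + ih' - hpascal
    have hnat : ∀ m : ℕ, P.eval (m : K) = 0 := by
      intro m
      induction m with
      | zero => simp [hP, rotheSum_zero]
      | succ m ihm => rw [hshift, Nat.cast_succ, add_sub_cancel_right, ihm]
    rw [← sub_eq_zero, ← hP, Polynomial.eq_zero_of_forall_eval_natCast_eq_zero hnat, eval_zero]

end Field

theorem stmt16 (α β γ : ℚ) (n : ℕ) (h : ∀ i ≤ n, γ + β * i ≠ 0) :
    ∑ i ∈ Finset.range (n + 1),
        γ / (γ + β * i) * Ring.choose (γ + β * i) i * Ring.choose (α + β * (n - i : ℕ)) (n - i) =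
      Ring.choose (α + γ + β * n) n := by
  rw [← rotheSum_eq_choose, rotheSum]
  refine sum_congr rfl fun i hi ↦ ?_
  rw [rotheCoeff_eq_div_mul_choose (h i (Nat.lt_succ_iff.mp (mem_range.mp hi)))]
end
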